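/- arXiv:2304.07823 — 7 statements merged into one kernel-verified Lean document; each statement's English description precedes it below -/
import Mathlib

section
/- If r is rational and cos(rπ) is rational, then cos(rπ) ∈ {0, 1, -1, 1/2, -1/2}. -/
open Real

namespace Niven

theorem niven (r : ℚ) (h : ∃ q : ℚ, Real.cos (r * π) = q) :
    Real.cos (r * π) ∈ ({0, 1, -1, 1/2, -1/2} : Set ℝ) := by
  have hmem := _root_.niven ⟨r, rfl⟩ h
  simp only [Set.mem_insert_iff, Set.mem_singleton_iff] at hmem ⊢
  tauto
end Niven
end

section
/- If r is rational and cos(rπ) is a real algebraic number of degree 2 over ℚ (a quadratic irrationality), then cos(rπ) ∈ {±√2/2, ±√3/2, (1+√5)/4, (1-√5)/4, (-1+√5)/4, (-1-√5)/4}. -/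
open Real Polynomial

/-!
Put `z = exp (r π i)` and `c = cos (r π)`. Then `z` is a root of unity, of order `n` say, and
`z ^ 2 + 1 = 2 c z`. If `p` is a rational quadratic with `p c = 0`, then `4 X ^ 2 p ((X + X⁻¹) / 2)`
is a rational quartic vanishing at `z`, so the cyclotomic polynomial `Φₙ`, the minimal polynomial
of `z`, has degree `φ n ≤ 4`; this leaves `n ∈ {1, 2, 3, 4, 5, 6, 8, 10, 12}`. Each `Φₙ` (times
`X ∓ 1` for `n ≤ 2`) is palindromic, so dividing `Φₙ z = 0` by a power of `z` turns it into an
equation for `c`: for `φ n ≤ 2` it makes `2c` an integer, contradicting irrationality, and for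
`n = 5, 10, 8, 12` it is one of the quadratics `4c² ± 2c - 1`, `4c² - 2`, `4c² - 3`.
-/

theorem Complex.exp_mul_I_sq_add_one (x : ℂ) :
    exp (x * I) ^ 2 + 1 = 2 * cos x * exp (x * I) := by
  rw [two_cos, add_mul, ← exp_add, ← exp_add, sq, ← exp_add, neg_mul, neg_add_cancel, exp_zero]

theorem natDegree_minpoly_le_four {K L : Type*} [Field K] [CommRing L] [Algebra K L]
    {p : K[X]} (hp : p.natDegree = 2) {x z : L} (hx : aeval x p = 0)
    (hz : z ^ 2 + 1 = 2 * x * z) : (minpoly K z).natDegree ≤ 4 := by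
  have hpx : p.coeff 0 • 1 + p.coeff 1 • x + p.coeff 2 • x ^ 2 = 0 := by
    simpa [aeval_eq_sum_range, hp, Finset.sum_range_succ] using hx
  -- `Q X = 4 X ^ 2 p ((X + X⁻¹) / 2)`
  set Q : K[X] := C (p.coeff 2) * (X ^ 2 + 1) ^ 2 + C (2 * p.coeff 1) * X * (X ^ 2 + 1)
    + C (4 * p.coeff 0) * X ^ 2
  have hQ : Q.natDegree = 4 := by
    simp only [Q]
    compute_degree!
    exact hp ▸ leadingCoeff_ne_zero.2 (ne_zero_of_natDegree_gt (hp ▸ two_pos))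
  have hQz : aeval z Q = 0 := by
    simp only [Q, map_add, map_mul, map_pow, aeval_C, aeval_X, map_one, map_ofNat, hz]
    simp only [Algebra.smul_def] at hpx
    linear_combination (4 * z ^ 2) * hpx
  have hQ0 : Q ≠ 0 := fun h => by simp [h] at hQ
  exact hQ ▸ natDegree_le_natDegree (minpoly.degree_le_of_ne_zero K z hQ0 hQz)

theorem Nat.Prime.pow_le_two_mul_totient {p : ℕ} (hp : p.Prime) (k : ℕ) :
    p ^ k ≤ 2 * (p ^ k).totient := by
  cases k with
  | zero => simp
  | succ j =>
    rw [Nat.totient_prime_pow_succ hp, pow_succ, ← mul_assoc, mul_comm 2, mul_assoc]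
    exact Nat.mul_le_mul_left _ (by have := hp.two_le; omega)

theorem Nat.mem_of_totient_le_four {n : ℕ} (hn : n ≠ 0) (h : n.totient ≤ 4) :
    n ∈ ({1, 2, 3, 4, 5, 6, 8, 10, 12} : Finset ℕ) := by
  have hdvd : n ∣ 120 := by
    refine (Nat.dvd_iff_prime_pow_dvd_dvd 120 n).2 fun p k hp hpk => ?_
    have hle : (p ^ k).totient ≤ 4 :=
      (Nat.le_of_dvd (Nat.totient_pos.2 (Nat.pos_of_ne_zero hn))
        (Nat.totient_dvd_of_dvd hpk)).trans h
    have hpk8 : p ^ k ≤ 8 := by linarith [hp.pow_le_two_mul_totient k]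
    exact (by decide : ∀ m ≤ 8, m ≠ 0 → m.totient ≤ 4 → m ∣ 120) _ hpk8
      (pow_ne_zero _ hp.ne_zero) hle
  exact (by decide : ∀ m ∈ Nat.divisors 120, m.totient ≤ 4 →
      m ∈ ({1, 2, 3, 4, 5, 6, 8, 10, 12} : Finset ℕ))
    n (Nat.mem_divisors.2 ⟨hdvd, by norm_num⟩) h

namespace Polynomial

variable (R : Type*) [CommRing R]

theorem cyclotomic_four : cyclotomic 4 R = X ^ 2 + 1 := by
  rw [show 4 = 2 * 2 by rfl, ← cyclotomic_expand_eq_cyclotomic Nat.prime_two (dvd_refl 2)]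
  simp

theorem cyclotomic_five : cyclotomic 5 R = X ^ 4 + X ^ 3 + X ^ 2 + X + 1 := by
  have : Fact (Nat.Prime 5) := ⟨by norm_num⟩
  simp only [cyclotomic_prime, Finset.sum_range_succ, Finset.range_one, Finset.sum_singleton,
    pow_zero, pow_one]
  abel

theorem cyclotomic_eight : cyclotomic 8 R = X ^ 4 + 1 := by
  rw [show 8 = 4 * 2 by rfl, ← cyclotomic_expand_eq_cyclotomic Nat.prime_two (by norm_num)]
  simp [cyclotomic_four, ← pow_mul]

theorem cyclotomic_ten : cyclotomic 10 R = X ^ 4 - X ^ 3 + X ^ 2 - X + 1 := by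
  suffices cyclotomic 10 ℤ = X ^ 4 - X ^ 3 + X ^ 2 - X + 1 by
    rw [← map_cyclotomic_int, this]
    simp
  apply mul_right_cancel₀ (cyclotomic_ne_zero 2 ℤ)
  rw [show 10 = 2 * 5 by rfl, ← cyclotomic_expand_eq_cyclotomic_mul (by norm_num) (by norm_num)]
  simp only [cyclotomic_two, map_add, expand_X, map_one]
  ring

theorem cyclotomic_twelve : cyclotomic 12 R = X ^ 4 - X ^ 2 + 1 := by
  rw [show 12 = 6 * 2 by rfl, ← cyclotomic_expand_eq_cyclotomic Nat.prime_two (by norm_num)]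
  simp [← pow_mul]

end Polynomial

section Palindromic

variable {R : Type*} [CommRing R] [IsDomain R] {z x a b : R}

theorem two_mul_add_eq_zero_of_palindromic_quadratic (hz0 : z ≠ 0)
    (hz : z ^ 2 + 1 = 2 * x * z) (h : z ^ 2 + a * z + 1 = 0) : 2 * x + a = 0 := by
  have : z * (2 * x + a) = 0 := by linear_combination h - hz
  exact (mul_eq_zero.1 this).resolve_left hz0

theorem four_mul_sq_add_eq_zero_of_palindromic_quartic (hz0 : z ≠ 0)
    (hz : z ^ 2 + 1 = 2 * x * z) (h : z ^ 4 + a * z ^ 3 + b * z ^ 2 + a * z + 1 = 0) :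
    4 * x ^ 2 + 2 * a * x + b - 2 = 0 := by
  have : z ^ 2 * (4 * x ^ 2 + 2 * a * x + b - 2) = 0 := by
    linear_combination h - (z ^ 2 + 1 + 2 * x * z + a * z) * hz
  exact (mul_eq_zero.1 this).resolve_left (pow_ne_zero 2 hz0)

end Palindromic

theorem IsPrimitiveRoot.quadratic_of_totient_le_four {z : ℂ} {c : ℝ} {n : ℕ}
    (hz : IsPrimitiveRoot z n) (hn : n ≠ 0) (hφ : n.totient ≤ 4) (hzc : z ^ 2 + 1 = 2 * c * z)
    (hc : Irrational c) :
    4 * c ^ 2 + 2 * c - 1 = 0 ∨ 4 * c ^ 2 - 2 * c - 1 = 0 ∨ 4 * c ^ 2 = 2 ∨ 4 * c ^ 2 = 3 := by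
  have hz0 : z ≠ 0 := hz.ne_zero hn
  have hroot := hz.isRoot_cyclotomic (Nat.pos_of_ne_zero hn)
  have quadratic (a : ℤ) (h : z ^ 2 + a * z + 1 = 0) : False := by
    have h2c : 2 * c + a = 0 := by
      exact_mod_cast two_mul_add_eq_zero_of_palindromic_quadratic hz0 hzc h
    exact hc ⟨-a / 2, by push_cast; linear_combination h2c / -2⟩
  have quartic (a b : ℤ) (h : z ^ 4 + a * z ^ 3 + b * z ^ 2 + a * z + 1 = 0) :
      4 * c ^ 2 + 2 * a * c + b - 2 = 0 := by
    exact_mod_cast four_mul_sq_add_eq_zero_of_palindromic_quartic hz0 hzc h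
  have hn' := Nat.mem_of_totient_le_four hn hφ
  simp only [Finset.mem_insert, Finset.mem_singleton] at hn'
  rcases hn' with rfl | rfl | rfl | rfl | rfl | rfl | rfl | rfl | rfl
  · simp only [cyclotomic_one, IsRoot.def, eval_sub, eval_X, eval_one] at hroot
    exact (quadratic (-2) (by linear_combination (z - 1) * hroot)).elim
  · simp only [cyclotomic_two, IsRoot.def, eval_add, eval_X, eval_one] at hroot
    exact (quadratic 2 (by linear_combination (z + 1) * hroot)).elim
  · exact (quadratic 1 (by simpa [cyclotomic_three] using hroot)).elim
  · exact (quadratic 0 (by simpa [cyclotomic_four] using hroot)).elim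
  · left
    linear_combination quartic 1 1 (by simpa [cyclotomic_five] using hroot)
  · exact (quadratic (-1) (by simpa [sub_eq_add_neg] using hroot)).elim
  · right; right; left
    linear_combination quartic 0 0 (by simpa [cyclotomic_eight] using hroot)
  · right; left
    linear_combination quartic (-1) 1 (by simpa [cyclotomic_ten, sub_eq_add_neg] using hroot)
  · right; right; right
    linear_combination quartic 0 (-1) (by simpa [cyclotomic_twelve, sub_eq_add_neg] using hroot)

theorem Real.eq_sqrt_or_eq_neg_sqrt_of_sq_eq {x a : ℝ} (h : x ^ 2 = a) : x = √a ∨ x = -√a :=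
  sq_eq_sq_iff_eq_or_eq_neg.1 (by rw [sq_sqrt (h ▸ sq_nonneg x), h])

theorem mem_of_quadratic {c : ℝ}
    (h : 4 * c ^ 2 + 2 * c - 1 = 0 ∨ 4 * c ^ 2 - 2 * c - 1 = 0 ∨ 4 * c ^ 2 = 2 ∨ 4 * c ^ 2 = 3) :
    c ∈ ({√2 / 2, -(√2 / 2), √3 / 2, -(√3 / 2), (1 + √5) / 4, (1 - √5) / 4,
      (-1 + √5) / 4, (-1 - √5) / 4} : Set ℝ) := by
  rcases h with h | h | h | h
  · obtain h | h := eq_sqrt_or_eq_neg_sqrt_of_sq_eq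
      (show (4 * c + 1) ^ 2 = 5 by linear_combination 4 * h)
    · simp [show c = (-1 + √5) / 4 by linarith]
    · simp [show c = (-1 - √5) / 4 by linarith]
  · obtain h | h := eq_sqrt_or_eq_neg_sqrt_of_sq_eq
      (show (4 * c - 1) ^ 2 = 5 by linear_combination 4 * h)
    · simp [show c = (1 + √5) / 4 by linarith]
    · simp [show c = (1 - √5) / 4 by linarith]
  · obtain h | h := eq_sqrt_or_eq_neg_sqrt_of_sq_eq (show (2 * c) ^ 2 = 2 by linear_combination h)
    · simp [show c = √2 / 2 by linarith]
    · simp [show c = -(√2 / 2) by linarith]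
  · obtain h | h := eq_sqrt_or_eq_neg_sqrt_of_sq_eq (show (2 * c) ^ 2 = 3 by linear_combination h)
    · simp [show c = √3 / 2 by linarith]
    · simp [show c = -(√3 / 2) by linarith]

theorem niven_quadratic (r : ℚ) (hirr : Irrational (Real.cos (r * π)))
    (halg : ∃ p : Polynomial ℚ, p.degree = 2 ∧ Polynomial.aeval (Real.cos (r * π)) p = 0) :
    Real.cos (r * π) ∈
      ({Real.sqrt 2 / 2, -(Real.sqrt 2 / 2), Real.sqrt 3 / 2, -(Real.sqrt 3 / 2),
        (1 + Real.sqrt 5) / 4, (1 - Real.sqrt 5) / 4,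
        (-1 + Real.sqrt 5) / 4, (-1 - Real.sqrt 5) / 4} : Set ℝ) := by
  obtain ⟨p, hp, hpc⟩ := halg
  set z := Complex.exp (r * π * Complex.I)
  have hfin : IsOfFinOrder z := isOfFinOrder_iff_pow_eq_one.2
    ⟨2 * r.den, by positivity, Complex.exp_rat_mul_pi_mul_I_pow_two_mul_den r⟩
  have hprim := IsPrimitiveRoot.orderOf z
  have hzc : z ^ 2 + 1 = 2 * (cos (r * π) : ℂ) * z := by
    push_cast
    exact Complex.exp_mul_I_sq_add_one _
  have hφ : (orderOf z).totient ≤ 4 := by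
    rw [← natDegree_cyclotomic (orderOf z) ℚ, cyclotomic_eq_minpoly_rat hprim hfin.orderOf_pos]
    refine natDegree_minpoly_le_four (natDegree_eq_of_degree_eq_some hp) ?_ hzc
    rw [← Complex.coe_algebraMap, aeval_algebraMap_apply, hpc, map_zero]
  exact mem_of_quadratic (hprim.quadratic_of_totient_le_four hfin.orderOf_pos.ne' hφ hzc hirr)
end

section
/- Let K be a subfield of ℝ and f : ℝ → ℝ be defined by f(x) = x² - 2. A real number x ∈ K is of the form 2·cos(rπ) for some rational r if and only if x is a preperiodic point of f, i.e., the forward orbit {f^[k](x) : k ≥ 0} is finite. -/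
open Real

lemma iter_two_cos (θ : ℝ) (k : ℕ) :
    (fun y : ℝ => y ^ 2 - 2)^[k] (2 * Real.cos θ) = 2 * Real.cos (2 ^ k * θ) := by
  induction k with
  | zero => simp
  | succ n ih =>
    rw [Function.iterate_succ_apply', ih]
    have h2 : (2:ℝ) ^ (n+1) * θ = 2 * (2 ^ n * θ) := by ring
    rw [h2, Real.cos_two_mul]
    ring

theorem cos_rational_iff_preperiodic (K : Subfield ℝ) (x : ℝ) (hx : x ∈ K) :
    (∃ r : ℚ, x = 2 * Real.cos (r * π)) ↔
      (Set.range fun k : ℕ => (fun y : ℝ => y ^ 2 - 2)^[k] x).Finite := by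
  constructor
  · rintro ⟨r, rfl⟩
    apply Set.Finite.subset
      (Set.Finite.image (fun m : ℤ => 2 * Real.cos (m * π / r.den)) (Set.finite_Ico (0:ℤ) (2 * r.den)))
    rintro _ ⟨k, rfl⟩
    simp only [iter_two_cos]
    set N : ℤ := 2 ^ k * r.num with hN
    set m : ℤ := N % (2 * r.den) with hm
    set t : ℤ := N / (2 * r.den) with ht
    have hqpos : (0:ℤ) < 2 * r.den := by positivity
    refine ⟨m, ⟨Int.emod_nonneg N hqpos.ne', Int.emod_lt_of_pos N hqpos⟩, ?_⟩
    have hNm : N = 2 * r.den * t + m := by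
      rw [hm, ht]; exact (Int.mul_ediv_add_emod N (2 * r.den)).symm
    have hden : (r.den : ℝ) ≠ 0 := by positivity
    have hNr : ((N : ℝ)) = 2 * r.den * t + m := by exact_mod_cast congrArg (Int.cast : ℤ → ℝ) hNm
    have hN' : ((N : ℝ)) = 2 ^ k * r.num := by push_cast [hN]; ring
    have hm' : (m : ℝ) = 2 ^ k * r.num - 2 * r.den * t := by linarith
    have key : (m : ℝ) * π / r.den = 2 ^ k * ((r:ℝ) * π) - t * (2 * π) := by
      rw [Rat.cast_def, hm']
      field_simp
    show 2 * Real.cos ((m:ℝ) * π / (r.den:ℝ)) = 2 * Real.cos (2 ^ k * ((r:ℝ) * π))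
    rw [key]
    have := Real.cos_add_int_mul_two_pi (2 ^ k * ((r:ℝ) * π) - t * (2 * π)) t
    rw [show 2 ^ k * ((r:ℝ) * π) - ↑t * (2 * π) + ↑t * (2 * π) = 2 ^ k * ((r:ℝ) * π) by ring] at this
    rw [this]
  · intro hfin
    -- first, |x| ≤ 2
    have hx2 : |x| ≤ 2 := by
      by_contra h
      push_neg at h
      set g : ℕ → ℝ := fun k => (fun y : ℝ => y ^ 2 - 2)^[k+1] x with hg
      have hgt : ∀ k, 2 < g k := by
        intro k
        induction k with
        | zero =>
          have h4 : 4 < x ^ 2 := by nlinarith [sq_abs x]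
          have h0 : g 0 = x ^ 2 - 2 := by simp [hg]
          rw [h0]; linarith
        | succ n ih =>
          have : g (n+1) = (g n) ^ 2 - 2 := by
            simp only [hg, Function.iterate_succ_apply']
          nlinarith
      have hmono : StrictMono g := by
        apply strictMono_nat_of_lt_succ
        intro n
        have h1 : g (n+1) = (g n) ^ 2 - 2 := by
          simp only [hg, Function.iterate_succ_apply']
        nlinarith [hgt n]
      have hsub : Set.range g ⊆ Set.range fun k : ℕ => (fun y : ℝ => y ^ 2 - 2)^[k] x := by
        rintro _ ⟨k, rfl⟩; exact ⟨k+1, rfl⟩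
      exact Set.infinite_range_of_injective hmono.injective (hfin.subset hsub)
    rw [abs_le] at hx2
    set θ : ℝ := Real.arccos (x / 2) with hθ
    have hxθ : x = 2 * Real.cos θ := by
      rw [hθ, Real.cos_arccos (by linarith) (by linarith)]; ring
    have hninj : ¬ Function.Injective (fun k : ℕ => (fun y : ℝ => y ^ 2 - 2)^[k] x) :=
      fun hinj => Set.infinite_range_of_injective hinj hfin
    rw [Function.not_injective_iff] at hninj
    obtain ⟨i, j, hij, hne⟩ := hninj
    rw [hxθ] at hij
    simp only [iter_two_cos] at hij
    have hcos : Real.cos (2 ^ i * θ) = Real.cos (2 ^ j * θ) := by linarith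
    rw [Real.cos_eq_cos_iff] at hcos
    obtain ⟨k, hk | hk⟩ := hcos
    · -- 2^j θ = 2kπ + 2^i θ
      refine ⟨2 * k / ((2:ℚ) ^ j - 2 ^ i), ?_⟩
      rw [hxθ]
      congr 1
      have hrp : ((2 * (k:ℚ) / ((2:ℚ) ^ j - 2 ^ i) : ℚ) : ℝ) * π = θ := by
        have hne'' : ((2:ℝ) ^ j - 2 ^ i) ≠ 0 := by
          intro hcon
          exact hne ((pow_right_strictMono₀ (by norm_num : (1:ℝ) < 2)).injective
            (sub_eq_zero.mp hcon)).symm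
        push_cast
        field_simp
        nlinarith [hk]
      rw [hrp]
    · -- 2^j θ = 2kπ - 2^i θ
      have hpos : ((2:ℝ) ^ j + 2 ^ i) ≠ 0 := by positivity
      refine ⟨2 * k / ((2:ℚ) ^ j + 2 ^ i), ?_⟩
      rw [hxθ]
      congr 1
      have hrp : ((2 * (k:ℚ) / ((2:ℚ) ^ j + 2 ^ i) : ℚ) : ℝ) * π = θ := by
        push_cast
        field_simp
        nlinarith [hk]
      rw [hrp]
end

section
/- The only rational periodic points of f(x) = x² - 2 are the fixed points 2 and -1. -/
private lemma den_sub_two (q : ℚ) : (q - 2).den = q.den := by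
  have hd0 : (0:ℤ) < (q.den : ℤ) := by exact_mod_cast q.pos
  have hcop : IsCoprime (q.num) (q.den : ℤ) :=
    (Int.isCoprime_iff_gcd_eq_one).mpr q.reduced
  have hcop2 : Nat.Coprime (q.num - 2 * q.den).natAbs ((q.den : ℤ)).natAbs := by
    have h := hcop.add_mul_left_left (-2)
    have h2 : IsCoprime (q.num - 2 * q.den) ((q.den : ℤ)) := by
      have : q.num - 2 * q.den = q.num + (q.den : ℤ) * (-2) := by ring
      rw [this]; exact h
    exact Int.isCoprime_iff_gcd_eq_one.mp h2
  have hden : (((q.den : ℤ)) : ℚ) ≠ 0 := by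
    exact_mod_cast q.den_ne_zero
  have heq : q - 2 = ((q.num - 2 * q.den : ℤ) : ℚ) / (((q.den : ℤ)) : ℚ) := by
    rw [eq_div_iff hden]
    have hmul : q * ((q.den : ℤ) : ℚ) = ((q.num : ℤ) : ℚ) := by
      exact_mod_cast Rat.mul_den_eq_num q
    push_cast
    push_cast at hmul
    linear_combination hmul
  have := Rat.den_div_eq_of_coprime hd0 hcop2
  rw [heq]
  omega

private lemma den_f (q : ℚ) : (q ^ 2 - 2).den = q.den ^ 2 := by
  rw [den_sub_two, Rat.den_pow]

theorem rat_periodic_points (x : ℚ)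
    (h : ∃ n : ℕ, 1 ≤ n ∧ (fun y : ℚ => y ^ 2 - 2)^[n] x = x) :
    x = 2 ∨ x = -1 := by
  obtain ⟨n, hn, hper⟩ := h
  set f : ℚ → ℚ := fun y : ℚ => y ^ 2 - 2 with hf
  -- Step 1: x is an integer (denominator 1)
  have hdenit : ∀ k : ℕ, (f^[k] x).den = x.den ^ (2 ^ k) := by
    intro k
    induction k with
    | zero => simp
    | succ k ih =>
      rw [Function.iterate_succ_apply']
      show ((f^[k] x) ^ 2 - 2).den = _
      rw [den_f, ih, ← pow_mul, pow_succ]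
  have hden1 : x.den = 1 := by
    by_contra hd
    have hd2 : 2 ≤ x.den := by
      have := x.pos
      omega
    have h2n : 2 ≤ 2 ^ n := by
      calc 2 = 2 ^ 1 := rfl
      _ ≤ 2 ^ n := Nat.pow_le_pow_right (by norm_num) hn
    have hlt : x.den < x.den ^ (2 ^ n) := by
      calc x.den < x.den ^ 2 := by nlinarith
      _ ≤ x.den ^ (2 ^ n) := Nat.pow_le_pow_right (by omega) h2n
    rw [← hdenit n, hper] at hlt
    omega
  -- Step 2: |x| ≤ 2
  have key : ∀ y : ℚ, 2 < |y| → |y| < |f y| ∧ 2 < |f y| := by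
    intro y hy
    have hsq : y ^ 2 = |y| ^ 2 := (sq_abs y).symm
    have h1 : (2:ℚ) < y ^ 2 - 2 := by nlinarith [abs_nonneg y]
    have h2 : |f y| = y ^ 2 - 2 := abs_of_pos (by simp only [hf]; linarith)
    refine ⟨?_, ?_⟩ <;> rw [h2] <;> nlinarith [abs_nonneg y]
  have habs : |x| ≤ 2 := by
    by_contra hx2
    push_neg at hx2
    have chain : ∀ k : ℕ, 2 < |f^[k] x| ∧ |x| ≤ |f^[k] x| := by
      intro k
      induction k with
      | zero => exact ⟨by simpa using hx2, by simp⟩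
      | succ k ih =>
        obtain ⟨h1, h2⟩ := ih
        have := key _ h1
        rw [Function.iterate_succ_apply']
        exact ⟨this.2, le_of_lt (lt_of_le_of_lt h2 this.1)⟩
    obtain ⟨m, rfl⟩ : ∃ m, n = m + 1 := ⟨n - 1, by omega⟩
    have h1 := (chain m).1
    have h2 := (chain m).2
    have h3 := (key _ h1).1
    rw [← Function.iterate_succ_apply' f m x, hper] at h3
    linarith
  -- Step 3: x ∈ {-2,-1,0,1,2}
  have hx : x = (x.num : ℚ) := by
    conv_lhs => rw [← Rat.num_div_den x, hden1]
    simp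
  have hnum1 : -2 ≤ x.num := by
    rw [hx, abs_le] at habs
    exact_mod_cast habs.1
  have hnum2 : x.num ≤ 2 := by
    rw [hx, abs_le] at habs
    exact_mod_cast habs.2
  have f2 : f 2 = 2 := by norm_num [hf]
  have fiter2 : ∀ k, f^[k] (2:ℚ) = 2 := fun k => Function.iterate_fixed f2 k
  have fn1 : f (-1) = -1 := by norm_num [hf]
  have fitern1 : ∀ k, f^[k] (-1:ℚ) = -1 := fun k => Function.iterate_fixed fn1 k
  have fneg2 : f (-2) = 2 := by norm_num [hf]
  have fiterneg2 : ∀ k, f^[k+1] (-2:ℚ) = 2 := by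
    intro k; rw [Function.iterate_succ_apply, fneg2, fiter2]
  obtain ⟨m, rfl⟩ : ∃ m, n = m + 1 := ⟨n - 1, by omega⟩
  interval_cases h : x.num
  · -- x = -2
    exfalso
    rw [hx] at hper
    norm_num at hper
    rw [fiter2] at hper
    norm_num at hper
  · -- x = -1
    right; rw [hx]; norm_num
  · -- x = 0
    exfalso
    rw [hx] at hper
    norm_num at hper
    rcases m with _ | j
    · norm_num at hper
    · rw [fiterneg2] at hper; norm_num at hper
  · -- x = 1
    exfalso
    rw [hx] at hper
    norm_num at hper
    rw [fitern1] at hper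
    norm_num at hper
  · left; rw [hx]; norm_num
end

section
/- Let K be a number field of degree D over ℚ and let α ∈ K be a periodic point of f(x) = x² - 2 with minimal period n. Then n divides D; in particular f^[D](α) = α. -/
/-!
Write `α = ζ + ζ⁻¹` with `ζ` a unit of an algebraic closure of `K`. Then
`f^[j] α = ζ ^ 2 ^ j + ζ ^ (-2 ^ j)`, so `f^[j] α = α` iff `ζ ^ 2 ^ j = ζ ^ (±1)`. Periodicity
forces `ζ` to be a root of unity, of order `m ≥ 3` unless `α = 2`, and then `f^[j] α = α` iff
`2 ^ j ≡ ±1 [ZMOD m]`: `n` is the order of `2` in `(ZMod m)ˣ ⧸ {±1}`, so `2 * n ∣ φ m`. Finally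
`φ m = [ℚ(ζ) : ℚ]` divides `[K(ζ) : ℚ] = [K : ℚ] * [K(ζ) : K]`, and `[K(ζ) : K] ∣ 2`.
-/

open Function Polynomial IntermediateField Module
open scoped Nat

theorem map_iterate_sq_sub_two {R S : Type*} [Ring R] [Ring S] (f : R →+* S) (j : ℕ) (x : R) :
    f ((fun y : R => y ^ 2 - 2)^[j] x) = (fun y : S => y ^ 2 - 2)^[j] (f x) :=
  Semiconj.iterate_right (fun y ↦ by rw [map_sub, map_pow, map_ofNat]) j x

section Units

variable {R : Type*} [CommRing R]

theorem iterate_sq_sub_two_units_add_inv (u : Rˣ) (j : ℕ) :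
    (fun y : R => y ^ 2 - 2)^[j] (u + ↑u⁻¹) = ↑(u ^ 2 ^ j) + ↑(u ^ 2 ^ j)⁻¹ := by
  induction j with
  | zero => simp
  | succ j ih =>
    rw [iterate_succ_apply', ih, pow_succ 2 j, pow_mul]
    generalize u ^ 2 ^ j = v
    rw [← inv_pow, Units.val_pow_eq_pow_val, Units.val_pow_eq_pow_val]
    linear_combination (2 : R) * v.mul_inv

theorem Units.add_inv_eq_add_inv_iff [IsDomain R] {x y : Rˣ} :
    (x + ↑x⁻¹ : R) = y + ↑y⁻¹ ↔ x = y ∨ x = y⁻¹ := by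
  have hfactor : ((x + ↑x⁻¹ : R) - (y + ↑y⁻¹)) * ↑(x * y) = (x - y) * (x * y - 1) := by
    push_cast
    linear_combination (y : R) * x.mul_inv - (x : R) * y.mul_inv
  rw [← sub_eq_zero, ← (x * y).isUnit.mul_left_eq_zero, hfactor, mul_eq_zero (M₀ := R),
    sub_eq_zero, sub_eq_zero, Units.val_inj, ← Units.val_mul, Units.val_eq_one,
    eq_inv_iff_mul_eq_one]

theorem iterate_sq_sub_two_units_add_inv_eq_self_iff [IsDomain R] (u : Rˣ) (j : ℕ) :
    (fun y : R => y ^ 2 - 2)^[j] (u + ↑u⁻¹) = u + ↑u⁻¹ ↔ u ^ 2 ^ j = u ∨ u ^ 2 ^ j = u⁻¹ := by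
  rw [iterate_sq_sub_two_units_add_inv, Units.add_inv_eq_add_inv_iff]

end Units

theorem exists_units_add_inv_eq {L : Type*} [Field L] [IsAlgClosed L] (a : L) :
    ∃ ζ : Lˣ, (ζ + ↑ζ⁻¹ : L) = a := by
  obtain ⟨z, hz⟩ := IsAlgClosed.exists_root (X ^ 2 - C a * X + 1) (by
    rw [show (X ^ 2 - C a * X + 1 : L[X]).degree = 2 by compute_degree!]
    exact two_ne_zero)
  have hz0 : z ≠ 0 := by rintro rfl; simp at hz
  refine ⟨Units.mk0 z hz0, ?_⟩
  simp only [IsRoot, eval_add, eval_sub, eval_pow, eval_mul, eval_C, eval_X, eval_one] at hz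
  simp only [Units.val_mk0, Units.val_inv_eq_inv_val]
  field_simp
  linear_combination hz

section Group

variable {G : Type*} [Group G]

theorem Subgroup.mem_zpowers_iff_of_sq_eq_one {g x : G} (hg : g ^ 2 = 1) :
    x ∈ Subgroup.zpowers g ↔ x = 1 ∨ x = g := by
  refine ⟨fun hx ↦ ?_, by rintro (rfl | rfl) <;> simp [Subgroup.mem_zpowers]⟩
  obtain ⟨k, rfl⟩ := Subgroup.mem_zpowers_iff.1 hx
  obtain ⟨l, rfl | rfl⟩ := Int.even_or_odd' k
  · simp [zpow_mul, hg]
  · simp [zpow_add, zpow_mul, hg]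

theorem mul_card_dvd_card_of_minimal_pow_mem (N : Subgroup G) [N.Normal] {g : G} {n : ℕ}
    (hn : 0 < n) (hmem : g ^ n ∈ N) (hmin : ∀ j, 0 < j → g ^ j ∈ N → n ≤ j) :
    n * Nat.card N ∣ Nat.card G := by
  have horder : orderOf (g : G ⧸ N) = n := by
    have hpow (j : ℕ) : (g : G ⧸ N) ^ j = 1 ↔ g ^ j ∈ N := by
      rw [← QuotientGroup.mk_pow, QuotientGroup.eq_one_iff]
    rw [orderOf_eq_iff hn]
    exact ⟨(hpow n).2 hmem, fun j hjn hj h ↦ (hmin j hj ((hpow j).1 h)).not_gt hjn⟩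
  rw [Subgroup.card_eq_card_quotient_mul_card_subgroup N, ← horder]
  exact mul_dvd_mul_right (orderOf_dvd_natCard _) _

theorem zpow_eq_zpow_iff_intCast_eq (x : G) (a b : ℤ) :
    x ^ a = x ^ b ↔ (a : ZMod (orderOf x)) = b := by
  rw [zpow_eq_zpow_iff_modEq, ZMod.intCast_eq_intCast_iff]

theorem pow_eq_self_or_inv_iff (x : G) (k : ℕ) :
    x ^ k = x ∨ x ^ k = x⁻¹ ↔ (k : ZMod (orderOf x)) = 1 ∨ (k : ZMod (orderOf x)) = -1 := by
  have h1 := zpow_eq_zpow_iff_intCast_eq x k 1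
  have h2 := zpow_eq_zpow_iff_intCast_eq x k (-1)
  simp only [zpow_natCast, zpow_one, zpow_neg, Int.cast_natCast, Int.cast_one,
    Int.cast_neg] at h1 h2
  rw [h1, h2]

theorem isOfFinOrder_of_pow_eq_self_or_inv {x : G} {k : ℕ} (hk : 1 < k)
    (h : x ^ k = x ∨ x ^ k = x⁻¹) : IsOfFinOrder x := by
  rw [isOfFinOrder_iff_pow_eq_one]
  rcases h with h | h
  · exact ⟨k - 1, by omega, by rw [pow_sub x hk.le, h, pow_one, mul_inv_cancel]⟩
  · exact ⟨k + 1, by omega, by rw [pow_succ, h, inv_mul_cancel]⟩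

theorem two_mul_dvd_totient_orderOf {ζ : G} (hζ : ζ ≠ 1) {n : ℕ} (hn : 0 < n)
    (hper : ζ ^ 2 ^ n = ζ ∨ ζ ^ 2 ^ n = ζ⁻¹)
    (hmin : ∀ j, 0 < j → (ζ ^ 2 ^ j = ζ ∨ ζ ^ 2 ^ j = ζ⁻¹) → n ≤ j) :
    2 * n ∣ φ (orderOf ζ) := by
  set m := orderOf ζ
  have hm0 : m ≠ 0 :=
    (isOfFinOrder_of_pow_eq_self_or_inv (Nat.one_lt_two_pow hn.ne') hper).orderOf_pos.ne'
  have : NeZero m := ⟨hm0⟩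
  have key (j : ℕ) : (ζ ^ 2 ^ j = ζ ∨ ζ ^ 2 ^ j = ζ⁻¹) ↔
      ((2 : ZMod m) ^ j = 1 ∨ (2 : ZMod m) ^ j = -1) := by
    simpa using pow_eq_self_or_inv_iff ζ (2 ^ j)
  have h2 : IsUnit (2 : ZMod m) := by
    refine (isUnit_pow_iff hn.ne').1 ?_
    rcases (key n).1 hper with h | h <;> simp [h]
  have hm : 2 < m := by
    have hm1 : m ≠ 1 := fun h ↦ hζ (orderOf_eq_one_iff.1 h)
    have hm2 : m ≠ 2 := by
      rintro hm
      rw [hm, show (2 : ZMod 2) = 0 from rfl] at h2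
      exact not_isUnit_zero h2
    omega
  have : Fact (1 < m) := ⟨by omega⟩
  have hmemN (j : ℕ) : h2.unit ^ j ∈ Subgroup.zpowers (-1) ↔
      ((2 : ZMod m) ^ j = 1 ∨ (2 : ZMod m) ^ j = -1) := by
    rw [Subgroup.mem_zpowers_iff_of_sq_eq_one (by simp), Units.ext_iff, Units.ext_iff]
    simp
  have hcardN : Nat.card (Subgroup.zpowers (-1 : (ZMod m)ˣ)) = 2 := by
    rw [Nat.card_zpowers, ← orderOf_units, Units.coe_neg_one, orderOf_neg_one,
      ZMod.ringChar_zmod_n, if_neg hm.ne']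
  have := mul_card_dvd_card_of_minimal_pow_mem (Subgroup.zpowers (-1)) hn
    ((hmemN n).2 ((key n).1 hper)) fun j hj h ↦ hmin j hj ((key j).2 ((hmemN j).1 h))
  rwa [hcardN, Nat.card_eq_fintype_card, ZMod.card_units_eq_totient, mul_comm] at this

end Group

theorem natDegree_minpoly_dvd_finrank_mul {F K L : Type*} [Field F] [Field K] [Field L]
    [Algebra F K] [Algebra K L] [Algebra F L] [IsScalarTower F K L] [FiniteDimensional F K]
    {x : L} (hx : IsIntegral K x) :
    (minpoly F x).natDegree ∣ finrank F K * (minpoly K x).natDegree := by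
  have := adjoin.finiteDimensional hx
  have : FiniteDimensional F K⟮x⟯ := .trans F K K⟮x⟯
  have : IsScalarTower F K⟮x⟯ L := .of_algebraMap_eq fun _ ↦ rfl
  have hgen : minpoly F (AdjoinSimple.gen K x) = minpoly F x := by
    rw [← minpoly.algebraMap_eq (algebraMap K⟮x⟯ L).injective, AdjoinSimple.algebraMap_gen]
  rw [← adjoin.finrank hx, finrank_mul_finrank, ← hgen]
  exact minpoly.degree_dvd (IsIntegral.of_finite F _)

theorem isIntegral_and_natDegree_minpoly_dvd_two_of_add_inv_eq {K L : Type*} [Field K] [Field L]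
    [Algebra K L] {ζ : Lˣ} {a : K} (hζ : (ζ + ↑ζ⁻¹ : L) = algebraMap K L a) :
    IsIntegral K (ζ : L) ∧ (minpoly K (ζ : L)).natDegree ∣ 2 := by
  have hmonic : (X ^ 2 - C a * X + 1 : K[X]).Monic := by monicity!
  have hdeg : (X ^ 2 - C a * X + 1 : K[X]).natDegree = 2 := by compute_degree!
  have hroot : aeval (ζ : L) (X ^ 2 - C a * X + 1) = 0 := by
    simp only [map_add, map_sub, map_mul, map_pow, aeval_X, aeval_C, map_one, ← hζ]
    linear_combination -ζ.mul_inv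
  have hint : IsIntegral K (ζ : L) := ⟨_, hmonic, hroot⟩
  have hle : (minpoly K (ζ : L)).natDegree ≤ 2 :=
    hdeg ▸ natDegree_le_natDegree (minpoly.min K _ hmonic hroot)
  have hpos := minpoly.natDegree_pos hint
  refine ⟨hint, ?_⟩
  interval_cases (minpoly K (ζ : L)).natDegree <;> norm_num

theorem totient_orderOf_dvd_two_mul_finrank {K L : Type*} [Field K] [NumberField K] [Field L]
    [CharZero L] [Algebra K L] {ζ : Lˣ} {a : K} (hζ : (ζ + ↑ζ⁻¹ : L) = algebraMap K L a)
    (hfin : IsOfFinOrder ζ) : φ (orderOf ζ) ∣ 2 * finrank ℚ K := by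
  have hprim : IsPrimitiveRoot (ζ : L) (orderOf ζ) := by
    rw [← orderOf_units]
    exact IsPrimitiveRoot.orderOf _
  obtain ⟨hint, hdeg⟩ := isIntegral_and_natDegree_minpoly_dvd_two_of_add_inv_eq hζ
  rw [← natDegree_cyclotomic (orderOf ζ) ℚ, cyclotomic_eq_minpoly_rat hprim hfin.orderOf_pos,
    mul_comm]
  exact (natDegree_minpoly_dvd_finrank_mul hint).trans (mul_dvd_mul_left _ hdeg)

theorem minimal_period_dvd_degree (K : Type*) [Field K] [NumberField K]
    (α : K) (n : ℕ) (hn : 1 ≤ n)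
    (hper : (fun y : K => y ^ 2 - 2)^[n] α = α)
    (hmin : ∀ m : ℕ, 1 ≤ m → (fun y : K => y ^ 2 - 2)^[m] α = α → n ≤ m) :
    n ∣ Module.finrank ℚ K ∧
      (fun y : K => y ^ 2 - 2)^[Module.finrank ℚ K] α = α := by
  suffices hdvd : n ∣ finrank ℚ K by
    obtain ⟨k, hk⟩ := hdvd
    exact ⟨⟨k, hk⟩, by rw [hk, iterate_mul]; exact iterate_fixed hper k⟩
  obtain ⟨ζ, hζ⟩ := exists_units_add_inv_eq (algebraMap K (AlgebraicClosure K) α)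
  have hfix (j : ℕ) :
      (fun y : K => y ^ 2 - 2)^[j] α = α ↔ ζ ^ 2 ^ j = ζ ∨ ζ ^ 2 ^ j = ζ⁻¹ := by
    rw [← (algebraMap K (AlgebraicClosure K)).injective.eq_iff, map_iterate_sq_sub_two, ← hζ,
      iterate_sq_sub_two_units_add_inv_eq_self_iff]
  by_cases hζ1 : ζ = 1
  · have : n ≤ 1 := hmin 1 le_rfl ((hfix 1).2 (by simp [hζ1]))
    simp [show n = 1 by omega]
  have hfin : IsOfFinOrder ζ :=
    isOfFinOrder_of_pow_eq_self_or_inv (Nat.one_lt_two_pow (by omega)) ((hfix n).1 hper)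
  have h2n : 2 * n ∣ φ (orderOf ζ) :=
    two_mul_dvd_totient_orderOf hζ1 hn ((hfix n).1 hper) fun j hj h ↦ hmin j hj ((hfix j).2 h)
  exact Nat.dvd_of_mul_dvd_mul_left two_pos (h2n.trans (totient_orderOf_dvd_two_mul_finrank hζ hfin))
end

section
/- Let p be an odd prime and k ≥ 1. If q is a prime dividing 2^(p^k) + 1 but not dividing 2^(p^(k-1)) + 1, then q ≡ 1 (mod 2·p^k). -/
theorem divisor_of_fermat_like (p : ℕ) (hp : p.Prime) (hodd : Odd p)
    (k : ℕ) (hk : 1 ≤ k) (q : ℕ) (hq : q.Prime)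
    (hdvd : q ∣ 2 ^ (p ^ k) + 1) (hndvd : ¬ q ∣ 2 ^ (p ^ (k - 1)) + 1) :
    q ≡ 1 [MOD 2 * p ^ k] := by
  haveI : Fact q.Prime := ⟨hq⟩
  have hpk : 0 < p ^ k := pow_pos hp.pos _
  have hq2 : q ≠ 2 := by
    rintro rfl
    have h2 : (2:ℕ) ∣ 2 ^ (p ^ k) := dvd_pow_self 2 hpk.ne'
    omega
  have hq3 : 2 < q := lt_of_le_of_ne hq.two_le (Ne.symm hq2)
  haveI : Fact (2 < q) := ⟨hq3⟩
  have hcast : (2 : ZMod q) ^ (p ^ k) = -1 := by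
    have h := (ZMod.natCast_eq_zero_iff _ _).mpr hdvd
    push_cast at h
    exact eq_neg_of_add_eq_zero_left h
  have hne : (2 : ZMod q) ^ (p ^ (k - 1)) ≠ -1 := by
    intro h
    apply hndvd
    rw [← ZMod.natCast_eq_zero_iff]
    push_cast
    rw [h]; ring
  have hneg : (-1 : ZMod q) ≠ 1 := ZMod.neg_one_ne_one
  have hn : orderOf (2 : ZMod q) = orderOf (2 : ZMod q) := rfl
  have h2pk : (2 : ZMod q) ^ (2 * p ^ k) = 1 := by
    rw [mul_comm, pow_mul, hcast, neg_one_sq]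
  have hdn : orderOf (2 : ZMod q) ∣ 2 * p ^ k := orderOf_dvd_of_pow_eq_one h2pk
  have hn2pk1 : ¬ orderOf (2 : ZMod q) ∣ 2 * p ^ (k - 1) := by
    intro h
    have h1 : (2 : ZMod q) ^ (2 * p ^ (k - 1)) = 1 := orderOf_dvd_iff_pow_eq_one.mp h
    rw [mul_comm, pow_mul, sq, mul_self_eq_one_iff] at h1
    rcases h1 with h1 | h1
    · have : (2 : ZMod q) ^ (p ^ k) = 1 := by
        have hk' : k = (k - 1) + 1 := by omega
        rw [hk', pow_succ, pow_mul, h1, one_pow]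
      rw [hcast] at this
      exact hneg this
    · exact hne h1
  have h2n : 2 ∣ orderOf (2 : ZMod q) := by
    by_contra h2n
    have hcop : (orderOf (2 : ZMod q)).Coprime 2 :=
      (Nat.prime_two.coprime_iff_not_dvd.mpr h2n).symm
    have hnpk : orderOf (2 : ZMod q) ∣ p ^ k := hcop.dvd_of_dvd_mul_left hdn
    have : (2 : ZMod q) ^ (p ^ k) = 1 := orderOf_dvd_iff_pow_eq_one.mp hnpk
    rw [hcast] at this
    exact hneg this
  obtain ⟨m, hm2⟩ := h2n
  rw [hm2] at hdn hn2pk1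
  have hm : m ∣ p ^ k := (mul_dvd_mul_iff_left (two_ne_zero)).mp hdn
  obtain ⟨j, hj, rfl⟩ := (Nat.dvd_prime_pow hp).mp hm
  have hjk : j = k := by
    by_contra hjk
    exact hn2pk1 (mul_dvd_mul_left 2 (pow_dvd_pow p (by omega)))
  subst hjk
  have h20 : (2 : ZMod q) ≠ 0 := by
    intro h
    have : ((2:ℕ) : ZMod q) = 0 := by push_cast; exact h
    rw [ZMod.natCast_eq_zero_iff] at this
    have := Nat.le_of_dvd (by norm_num) this
    omega
  have hdvdq : 2 * p ^ j ∣ q - 1 := by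
    rw [← hm2]
    exact ZMod.orderOf_dvd_card_sub_one h20
  exact ((Nat.modEq_iff_dvd' (by omega)).mpr hdvdq).symm
end

section
/- The polynomial f^[2](x) - x, where f(x) = x² - 2, factors over ℚ as (x - 2)(x + 1)(x² + x - 1), and the set of preperiodic points of f in the quadratic field ℚ(√5) is {0, ±1, ±2, (±1 ± √5)/2}. -/
/-!
A real point with finite forward orbit under `f(y) = y² - 2` satisfies `|x| ≤ 2`, since beyond `2`
the absolute value of the orbit increases strictly, and it is an algebraic integer: from
`f^[m] x = f^[n] x` with `m < n` it is a root of the monic integer polynomial `f^[n] - f^[m]`,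
of degree `2ⁿ`. For `x = a + b√5` the conjugation `a + b√5 ↦ a - b√5` commutes with `f`, so the
conjugate `x'` has finite orbit as well. Then the trace `x + x' = 2a`, the norm `x x' = a² - 5b²`
and `√5 (x - x') = 10b` are rational algebraic integers, hence integers, which forces
`x = (u + t√5)/2` with `u, t ∈ ℤ` and `u² ≡ 5t² (mod 4)`; the bounds `|x|, |x'| ≤ 2` leave the nine
listed points. Conversely these nine points form an `f`-invariant set.
-/

open Polynomial Function

section Orbit

variable {α β : Type*}

theorem Function.Semiconj.range_iterate_apply {φ : α → β} {g : α → α} {f : β → β}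
    (h : Semiconj φ g f) (p : α) :
    (Set.range fun k : ℕ => f^[k] (φ p)) = φ '' Set.range fun k : ℕ => g^[k] p := by
  rw [← Set.range_comp]
  exact congrArg Set.range (funext fun k => ((h.iterate_right k).eq p).symm)

theorem Set.Finite.range_iterate_of_mapsTo {f : α → α} {s : Set α} (hs : s.Finite)
    (hf : Set.MapsTo f s s) {x : α} (hx : x ∈ s) : (Set.range fun k : ℕ => f^[k] x).Finite :=
  hs.subset <| Set.range_subset_iff.2 fun k => hf.iterate k hx

end Orbit

theorem abs_lt_abs_sq_sub_two {w : ℝ} (hw : 2 < |w|) : |w| < |w ^ 2 - 2| :=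
  calc |w| < w ^ 2 - 2 := by nlinarith [sq_abs w]
    _ ≤ |w ^ 2 - 2| := le_abs_self _

theorem two_lt_abs_iterate_sq_sub_two {z : ℝ} (hz : 2 < |z|) (k : ℕ) :
    2 < |(fun y : ℝ => y ^ 2 - 2)^[k] z| := by
  induction k with
  | zero => exact hz
  | succ k ih =>
    rw [iterate_succ_apply']
    exact ih.trans (abs_lt_abs_sq_sub_two ih)

theorem strictMono_abs_iterate_sq_sub_two {z : ℝ} (hz : 2 < |z|) :
    StrictMono fun k : ℕ => |(fun y : ℝ => y ^ 2 - 2)^[k] z| :=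
  strictMono_nat_of_lt_succ fun k => by
    simpa only [iterate_succ_apply'] using
      abs_lt_abs_sq_sub_two (two_lt_abs_iterate_sq_sub_two hz k)

theorem abs_le_two_of_finite_range_iterate_sq_sub_two {z : ℝ}
    (h : (Set.range fun k : ℕ => (fun y : ℝ => y ^ 2 - 2)^[k] z).Finite) : |z| ≤ 2 := by
  by_contra! hz
  exact Set.infinite_range_of_injective
    (Injective.of_comp (f := abs) (strictMono_abs_iterate_sq_sub_two hz).injective) h

theorem semiconj_sq_sub_two {R S F : Type*} [Ring R] [Ring S] [FunLike F R S]
    [RingHomClass F R S] (φ : F) :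
    Semiconj φ (fun y : R => y ^ 2 - 2) (fun y : S => y ^ 2 - 2) := fun y => by
  simp only [map_sub, map_pow, map_ofNat]

noncomputable def sqSubTwoIterate (k : ℕ) : ℤ[X] := (fun p : ℤ[X] => p ^ 2 - 2)^[k] X

theorem aeval_sqSubTwoIterate {A : Type*} [CommRing A] (z : A) (k : ℕ) :
    aeval z (sqSubTwoIterate k) = (fun y : A => y ^ 2 - 2)^[k] z := by
  rw [sqSubTwoIterate, ((semiconj_sq_sub_two (aeval (R := ℤ) z)).iterate_right k).eq X, aeval_X]

theorem natDegree_sqSubTwoIterate (k : ℕ) : (sqSubTwoIterate k).natDegree = 2 ^ k := by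
  induction k with
  | zero => simp [sqSubTwoIterate]
  | succ k ih =>
    rw [sqSubTwoIterate, iterate_succ_apply', ← sqSubTwoIterate]
    have hlt : natDegree (2 : ℤ[X]) < natDegree (sqSubTwoIterate k ^ 2) := by
      rw [natDegree_ofNat, natDegree_pow, ih]
      positivity
    rw [natDegree_sub_eq_left_of_natDegree_lt hlt, natDegree_pow, ih, pow_succ, mul_comm]

theorem monic_sqSubTwoIterate (k : ℕ) : (sqSubTwoIterate k).Monic := by
  induction k with
  | zero => exact monic_X
  | succ k ih =>
    rw [sqSubTwoIterate, iterate_succ_apply', ← sqSubTwoIterate]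
    refine (ih.pow 2).sub_of_left (degree_lt_degree ?_)
    rw [natDegree_ofNat, natDegree_pow, natDegree_sqSubTwoIterate]
    positivity

theorem isIntegral_of_finite_range_iterate_sq_sub_two {A : Type*} [CommRing A] {z : A}
    (h : (Set.range fun k : ℕ => (fun y : A => y ^ 2 - 2)^[k] z).Finite) : IsIntegral ℤ z := by
  obtain ⟨m, n, hmn, heq⟩ := h.exists_lt_map_eq_of_forall_mem Set.mem_range_self
  refine ⟨sqSubTwoIterate n - sqSubTwoIterate m, (monic_sqSubTwoIterate n).sub_of_left ?_, ?_⟩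
  · apply degree_lt_degree
    rw [natDegree_sqSubTwoIterate, natDegree_sqSubTwoIterate]
    exact Nat.pow_lt_pow_right one_lt_two hmn
  · rw [← aeval_def, map_sub, aeval_sqSubTwoIterate, aeval_sqSubTwoIterate, heq, sub_self]

theorem exists_intCast_eq_of_isIntegral {K : Type*} [Field K] [CharZero K] {q : ℚ}
    (h : IsIntegral ℤ (q : K)) : ∃ n : ℤ, (n : ℚ) = q := by
  rw [← eq_ratCast (algebraMap ℚ K), isIntegral_algebraMap_iff (algebraMap ℚ K).injective] at h
  exact IsIntegrallyClosed.isIntegral_iff.mp h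

def sqSubTwoCoords (d : ℚ) (p : ℚ × ℚ) : ℚ × ℚ := (p.1 ^ 2 + d * p.2 ^ 2 - 2, 2 * p.1 * p.2)

theorem semiconj_sqSubTwoCoords {d : ℚ} {r : ℝ} (hr : r ^ 2 = d) :
    Semiconj (fun p : ℚ × ℚ => (p.1 : ℝ) + p.2 * r) (sqSubTwoCoords d)
      fun y : ℝ => y ^ 2 - 2 := by
  rintro ⟨a, b⟩
  simp only [sqSubTwoCoords]
  push_cast
  linear_combination (b : ℝ) ^ 2 * hr.symm

theorem Irrational.injective_ratCast_add_ratCast_mul {r : ℝ} (hr : Irrational r) :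
    Injective fun p : ℚ × ℚ => (p.1 : ℝ) + p.2 * r := by
  rintro ⟨a, b⟩ ⟨c, e⟩ h
  simp only at h
  obtain rfl : b = e := by
    by_contra hbe
    refine (hr.ratCast_mul (sub_ne_zero.2 hbe)).ne_rat (c - a) ?_
    push_cast
    linarith
  simp_all

theorem finite_range_iterate_sq_sub_two_sub_mul {d : ℚ} {r : ℝ} (hr : Irrational r)
    (hd : r ^ 2 = d) {a b : ℚ}
    (h : (Set.range fun k : ℕ => (fun y : ℝ => y ^ 2 - 2)^[k] (a + b * r)).Finite) :
    (Set.range fun k : ℕ => (fun y : ℝ => y ^ 2 - 2)^[k] (a - b * r)).Finite := by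
  have hneg := semiconj_sqSubTwoCoords (r := -r) (by rw [neg_sq, hd])
  rw [(semiconj_sqSubTwoCoords hd).range_iterate_apply (a, b)] at h
  rw [sub_eq_add_neg, ← mul_neg, hneg.range_iterate_apply (a, b)]
  exact (h.of_finite_image hr.injective_ratCast_add_ratCast_mul.injOn).image _

def sqrtFivePreperiodicPts : Set ℝ :=
  {0, 1, -1, 2, -2, (1 + √5) / 2, (1 - √5) / 2, (-1 + √5) / 2, (-1 - √5) / 2}

theorem exists_int_of_isIntegral_add_sub_mul_sqrt_five {a b : ℚ}
    (hx : IsIntegral ℤ ((a : ℝ) + b * √5)) (hx' : IsIntegral ℤ ((a : ℝ) - b * √5)) :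
    ∃ u t : ℤ, 4 ∣ u ^ 2 - 5 * t ^ 2 ∧
      (a : ℝ) + b * √5 = (u + t * √5) / 2 ∧ (a : ℝ) - b * √5 = (u - t * √5) / 2 := by
  have h5 : √5 ^ 2 = 5 := Real.sq_sqrt (by norm_num)
  have hsqrt : IsIntegral ℤ √5 := ⟨X ^ 2 - C 5, monic_X_pow_sub_C _ two_ne_zero, by simp [h5]⟩
  obtain ⟨u, hu⟩ := exists_intCast_eq_of_isIntegral (K := ℝ) (q := 2 * a) <| by
    rw [show ((2 * a : ℚ) : ℝ) = (a + b * √5) + (a - b * √5) by push_cast; ring]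
    exact hx.add hx'
  obtain ⟨v, hv⟩ := exists_intCast_eq_of_isIntegral (K := ℝ) (q := a ^ 2 - 5 * b ^ 2) <| by
    rw [show ((a ^ 2 - 5 * b ^ 2 : ℚ) : ℝ) = (a + b * √5) * (a - b * √5) by
      push_cast; linear_combination (b : ℝ) ^ 2 * h5]
    exact hx.mul hx'
  obtain ⟨r, hr⟩ := exists_intCast_eq_of_isIntegral (K := ℝ) (q := 10 * b) <| by
    rw [show ((10 * b : ℚ) : ℝ) = √5 * ((a + b * √5) - (a - b * √5)) by
      push_cast; linear_combination -2 * (b : ℝ) * h5]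
    exact hsqrt.mul (hx.sub hx')
  have hr2 : r ^ 2 = 5 * (u ^ 2 - 4 * v) := by
    have : (r : ℚ) ^ 2 = 5 * ((u : ℚ) ^ 2 - 4 * v) := by rw [hu, hv, hr]; ring
    exact_mod_cast this
  obtain ⟨t, rfl⟩ : 5 ∣ r := (show Prime (5 : ℤ) by norm_num).dvd_of_dvd_pow (Dvd.intro _ hr2.symm)
  have hu' : (u : ℝ) = 2 * a := by exact_mod_cast congrArg (Rat.cast : ℚ → ℝ) hu
  have ht' : (t : ℝ) = 2 * b := by
    have := congrArg (Rat.cast : ℚ → ℝ) hr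
    push_cast at this
    linarith
  refine ⟨u, t, ⟨v, by linarith⟩, ?_, ?_⟩ <;> rw [hu', ht'] <;> ring

theorem mem_sqrtFivePreperiodicPts_of_abs_le_two {u t : ℤ} (h4 : 4 ∣ u ^ 2 - 5 * t ^ 2)
    (hx : |(u + t * √5) / 2| ≤ 2) (hx' : |(u - t * √5) / 2| ≤ 2) :
    (u + t * √5) / 2 ∈ sqrtFivePreperiodicPts := by
  have h5 : √5 ^ 2 = 5 := Real.sq_sqrt (by norm_num)
  have h5gt : 2 < √5 := by nlinarith [Real.sqrt_nonneg 5]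
  obtain ⟨hx₁, hx₂⟩ := abs_le.mp hx
  obtain ⟨hx₁', hx₂'⟩ := abs_le.mp hx'
  obtain ⟨hu₁, hu₂⟩ : -4 ≤ u ∧ u ≤ 4 := by
    have : (-4 : ℝ) ≤ u ∧ (u : ℝ) ≤ 4 := ⟨by linarith, by linarith⟩
    exact_mod_cast this
  obtain ⟨ht₁, ht₂⟩ : -1 ≤ t ∧ t ≤ 1 := by
    have : (t : ℝ) ^ 2 * 5 ≤ 16 := by nlinarith
    have : t ^ 2 * 5 ≤ 16 := by exact_mod_cast this
    constructor <;> nlinarith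
  simp only [sqrtFivePreperiodicPts, Set.mem_insert_iff, Set.mem_singleton_iff]
  -- the congruence rules out `u ≢ t (mod 2)`, the bound rules out `(±3 ± √5) / 2`
  interval_cases t <;> interval_cases u <;> first
    | (norm_num at h4; done)
    | (norm_num at hx₂ hx₁'; linarith)
    | norm_num [← sub_eq_add_neg]

theorem mem_sqrtFivePreperiodicPts_of_finite_range_iterate {a b : ℚ}
    (h : (Set.range fun k : ℕ => (fun y : ℝ => y ^ 2 - 2)^[k] (a + b * √5)).Finite) :
    (a : ℝ) + b * √5 ∈ sqrtFivePreperiodicPts := by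
  have hirr : Irrational √5 := by exact_mod_cast Nat.prime_five.irrational_sqrt
  have h' := finite_range_iterate_sq_sub_two_sub_mul hirr (d := 5) (by simp) h
  obtain ⟨u, t, h4, hx, hx'⟩ := exists_int_of_isIntegral_add_sub_mul_sqrt_five
    (isIntegral_of_finite_range_iterate_sq_sub_two h)
    (isIntegral_of_finite_range_iterate_sq_sub_two h')
  rw [hx] at h ⊢
  rw [hx'] at h'
  exact mem_sqrtFivePreperiodicPts_of_abs_le_two h4
    (abs_le_two_of_finite_range_iterate_sq_sub_two h)
    (abs_le_two_of_finite_range_iterate_sq_sub_two h')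

theorem mapsTo_sq_sub_two_sqrtFivePreperiodicPts :
    Set.MapsTo (fun y : ℝ => y ^ 2 - 2) sqrtFivePreperiodicPts sqrtFivePreperiodicPts := by
  have h5 : √5 ^ 2 = 5 := Real.sq_sqrt (by norm_num)
  intro x hx
  simp only [sqrtFivePreperiodicPts, Set.mem_insert_iff, Set.mem_singleton_iff] at hx
  rcases hx with rfl | rfl | rfl | rfl | rfl | rfl | rfl | rfl | rfl <;> dsimp only
  any_goals (norm_num [sqrtFivePreperiodicPts]; done)
  · rw [show ((1 + √5) / 2) ^ 2 - 2 = (-1 + √5) / 2 by linear_combination h5 / 4]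
    simp [sqrtFivePreperiodicPts]
  · rw [show ((1 - √5) / 2) ^ 2 - 2 = (-1 - √5) / 2 by linear_combination h5 / 4]
    simp [sqrtFivePreperiodicPts]
  · rw [show ((-1 + √5) / 2) ^ 2 - 2 = (-1 - √5) / 2 by linear_combination h5 / 4]
    simp [sqrtFivePreperiodicPts]
  · rw [show ((-1 - √5) / 2) ^ 2 - 2 = (-1 + √5) / 2 by linear_combination h5 / 4]
    simp [sqrtFivePreperiodicPts]

theorem exists_rat_of_mem_sqrtFivePreperiodicPts {x : ℝ} (hx : x ∈ sqrtFivePreperiodicPts) :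
    ∃ a b : ℚ, x = a + b * √5 := by
  simp only [sqrtFivePreperiodicPts, Set.mem_insert_iff, Set.mem_singleton_iff] at hx
  rcases hx with rfl | rfl | rfl | rfl | rfl | rfl | rfl | rfl | rfl
  exacts [⟨0, 0, by simp⟩, ⟨1, 0, by simp⟩, ⟨-1, 0, by simp⟩, ⟨2, 0, by simp⟩, ⟨-2, 0, by simp⟩,
    ⟨1 / 2, 1 / 2, by push_cast; ring⟩, ⟨1 / 2, -1 / 2, by push_cast; ring⟩,
    ⟨-1 / 2, 1 / 2, by push_cast; ring⟩, ⟨-1 / 2, -1 / 2, by push_cast; ring⟩]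

theorem second_iterate_factorization_and_quadratic_preperiodic :
    ((X ^ 2 - C 2 : Polynomial ℚ).comp (X ^ 2 - C 2) - X =
        (X - C 2) * (X + C 1) * (X ^ 2 + X - C 1)) ∧
      {x : ℝ | (∃ a b : ℚ, x = a + b * Real.sqrt 5) ∧
          (Set.range fun k : ℕ => (fun y : ℝ => y ^ 2 - 2)^[k] x).Finite} =
        ({0, 1, -1, 2, -2, (1 + Real.sqrt 5) / 2, (1 - Real.sqrt 5) / 2,
          (-1 + Real.sqrt 5) / 2, (-1 - Real.sqrt 5) / 2} : Set ℝ) := by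
  refine ⟨?_, Set.Subset.antisymm ?_ fun x hx => ⟨?_, ?_⟩⟩
  · simp only [sub_comp, pow_comp, X_comp, ofNat_comp, C_1, C_ofNat]
    ring
  · rintro _ ⟨⟨a, b, rfl⟩, h⟩
    exact mem_sqrtFivePreperiodicPts_of_finite_range_iterate h
  · exact exists_rat_of_mem_sqrtFivePreperiodicPts hx
  · exact (by simp [sqrtFivePreperiodicPts] : sqrtFivePreperiodicPts.Finite).range_iterate_of_mapsTo
      mapsTo_sq_sub_two_sqrtFivePreperiodicPts hx
end
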